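/- arXiv:2603.01817 — 6 statements merged into one kernel-verified Lean document; each statement's English description precedes it below -/
import Mathlib

section
/- Let R be a commutative ring and r, s ∈ R with r² + s² = -1. Then the map ψ from the quaternion algebra ℍ(R) = R⟨1,i,j,k⟩ (with i² = j² = k² = ijk = -1) to the 2×2 matrix ring M₂(R), sending a₀ + a₁i + a₂j + a₃k to the matrix with rows (a₀ + a₁r + a₂s, a₃ - a₂r + a₁s) and (-a₃ - a₂r + a₁s, a₀ - a₁r - a₂s), is a ring homomorphism. -/
open Quaternion Matrix

/-- The map `ψ : ℍ(R) → M₂(R)` associated to `r, s ∈ R`, sending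
`a₀ + a₁ i + a₂ j + a₃ k` to the matrix with rows
`(a₀ + a₁ r + a₂ s, a₃ - a₂ r + a₁ s)` and `(-a₃ - a₂ r + a₁ s, a₀ - a₁ r - a₂ s)`. -/
def quatToMatrix {R : Type*} [CommRing R] (r s : R) (α : ℍ[R]) :
    Matrix (Fin 2) (Fin 2) R :=
  !![α.re + α.imI * r + α.imJ * s, α.imK - α.imJ * r + α.imI * s;
     -α.imK - α.imJ * r + α.imI * s, α.re - α.imI * r - α.imJ * s]

/-! The matrices `ψ i = !![r, s; s, -r]`, `ψ j = !![s, -r; -r, -s]` and `ψ k = !![0, 1; -1, 0]`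
square to `(r² + s²) • 1 = -1` and satisfy `ψ i * ψ j = ψ k = -(ψ j * ψ i)`, so they form a
quaternionic basis of `M₂(R)`. By the universal property of `ℍ[R]` they extend to an `R`-algebra
homomorphism, which is `ψ`. -/

namespace Quaternion

variable {R : Type*} [CommRing R] {r s : R}

def matrixBasis (hrs : r ^ 2 + s ^ 2 = -1) :
    QuaternionAlgebra.Basis (Matrix (Fin 2) (Fin 2) R) (-1 : R) 0 (-1) where
  i := !![r, s; s, -r]
  j := !![s, -r; -r, -s]
  k := !![0, 1; -1, 0]
  i_mul_i := by ext i j; fin_cases i <;> fin_cases j <;> simp <;> grind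
  j_mul_j := by ext i j; fin_cases i <;> fin_cases j <;> simp <;> grind
  i_mul_j := by ext i j; fin_cases i <;> fin_cases j <;> simp <;> grind
  j_mul_i := by ext i j; fin_cases i <;> fin_cases j <;> simp <;> grind

theorem coe_liftHom_matrixBasis (hrs : r ^ 2 + s ^ 2 = -1) :
    ⇑(matrixBasis hrs).liftHom = quatToMatrix r s := by
  ext α i j
  fin_cases i <;> fin_cases j <;>
    simp [matrixBasis, quatToMatrix, QuaternionAlgebra.Basis.lift,
      Matrix.algebraMap_eq_diagonal] <;> ring

end Quaternion

/-- If `r² + s² = -1` in a commutative ring `R`, then `ψ` is a ring homomorphism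
from the quaternions over `R` to `2 × 2` matrices over `R`. -/
theorem quatToMatrix_ringHom {R : Type*} [CommRing R] (r s : R)
    (hrs : r ^ 2 + s ^ 2 = -1) :
    (∀ α β : ℍ[R], quatToMatrix r s (α + β) = quatToMatrix r s α + quatToMatrix r s β) ∧
    quatToMatrix r s 1 = 1 ∧
    (∀ α β : ℍ[R], quatToMatrix r s (α * β) = quatToMatrix r s α * quatToMatrix r s β) := by
  rw [← Quaternion.coe_liftHom_matrixBasis hrs]
  exact ⟨map_add _, map_one _, map_mul _⟩
end

section
/- Let R be a commutative ring, r, s ∈ R with r² + s² = -1, and ψ : ℍ(R) → M₂(R) as above. Then for every quaternion α: (1) ψ(α*) = ψ(α)ᵗ, where α* negates the coefficient of k; (2) ψ(α') · ψ(α)ᵗ = N(α) · I₂, where α' negates the coefficients of i and j; and (3) ψ(ᾱ) · ψ(α) = N(α) · I₂. -/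
open Quaternion Matrix

/-- The anti-involution `α ↦ α*` negating the coefficient of `k`. -/
def quatStarK {R : Type*} [CommRing R] (α : ℍ[R]) : ℍ[R] :=
  ⟨α.re, α.imI, α.imJ, -α.imK⟩

/-- The involution `α ↦ α'` negating the coefficients of `i` and `j`. -/
def quatPrime {R : Type*} [CommRing R] (α : ℍ[R]) : ℍ[R] :=
  ⟨α.re, -α.imI, -α.imJ, α.imK⟩

/-! Conjugation `ᾱ` is the composite `(α*)'`, and `ψ(α*)ᵀ = ψ(α)`, so part (3) is part (2)
applied to `α*`. Part (2) is a direct computation: `r² + s² = -1` turns the diagonal entries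
into `a₀² + a₁² + a₂² + a₃²` and makes the off-diagonal ones cancel. -/

section

variable {R : Type*} [CommRing R]

theorem quatToMatrix_quatStarK (r s : R) (α : ℍ[R]) :
    quatToMatrix r s (quatStarK α) = (quatToMatrix r s α)ᵀ := by
  ext i j
  fin_cases i <;> fin_cases j <;> simp [quatToMatrix, quatStarK]

theorem quatPrime_quatStarK (α : ℍ[R]) : quatPrime (quatStarK α) = star α := by
  ext <;> simp [quatPrime, quatStarK]

theorem normSq_quatStarK (α : ℍ[R]) : normSq (quatStarK α) = normSq α := by
  rw [normSq_def', normSq_def', quatStarK, neg_sq]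

theorem quatToMatrix_quatPrime_mul_transpose {r s : R} (hrs : r ^ 2 + s ^ 2 = -1)
    (α : ℍ[R]) :
    quatToMatrix r s (quatPrime α) * (quatToMatrix r s α)ᵀ =
      normSq α • (1 : Matrix (Fin 2) (Fin 2) R) := by
  rw [← quatToMatrix_quatStarK, quatToMatrix, quatToMatrix, mul_fin_two, one_fin_two, smul_of,
    smul_vec2, smul_vec2, smul_vec2, normSq_def']
  simp only [quatPrime, quatStarK, smul_eq_mul, mul_one, mul_zero]
  refine congrArg of (vec2_eq (vec2_eq ?_ ?_) (vec2_eq ?_ ?_))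
  · linear_combination (-(α.imI ^ 2 + α.imJ ^ 2)) * hrs
  · ring
  · ring
  · linear_combination (-(α.imI ^ 2 + α.imJ ^ 2)) * hrs

theorem quatToMatrix_star_mul {r s : R} (hrs : r ^ 2 + s ^ 2 = -1) (α : ℍ[R]) :
    quatToMatrix r s (star α) * quatToMatrix r s α =
      normSq α • (1 : Matrix (Fin 2) (Fin 2) R) := by
  have h := quatToMatrix_quatPrime_mul_transpose hrs (quatStarK α)
  rwa [quatPrime_quatStarK, quatToMatrix_quatStarK, transpose_transpose,
    normSq_quatStarK] at h

end

/-- Suppose `r² + s² = -1` in `R`. Then for every quaternion `α`: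
(1) `ψ(α*) = ψ(α)ᵗ`; (2) `ψ(α') · ψ(α)ᵗ = N(α) · I₂`; (3) `ψ(ᾱ) · ψ(α) = N(α) · I₂`,
where `ᾱ = star α` is quaternionic conjugation and `N(α) = α ᾱ` is the norm. -/
theorem quatToMatrix_star_transpose {R : Type*} [CommRing R] (r s : R)
    (hrs : r ^ 2 + s ^ 2 = -1) (α : ℍ[R]) :
    quatToMatrix r s (quatStarK α) = (quatToMatrix r s α)ᵀ ∧
    quatToMatrix r s (quatPrime α) * (quatToMatrix r s α)ᵀ =
      Quaternion.normSq α • (1 : Matrix (Fin 2) (Fin 2) R) ∧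
    quatToMatrix r s (star α) * quatToMatrix r s α =
      Quaternion.normSq α • (1 : Matrix (Fin 2) (Fin 2) R) :=
  ⟨quatToMatrix_quatStarK r s α, quatToMatrix_quatPrime_mul_transpose hrs α,
    quatToMatrix_star_mul hrs α⟩
end

section
/- In the Laurent polynomial ring ℤ[p, Y^{±1}, Z^{±1}] (with p treated as a formal variable), let τ̂₁₂ = p²YZ² + p²Y + p² + p²Y⁻¹ - 1 + p²Y⁻¹Z⁻², let τ̂₀₂ = p³Y²Z² + p³YZ² + p³Z² - p²YZ² + p³Y + 2p³ - p²Y + p³Y⁻¹ - 2p² + p³Z⁻² - p²Y⁻¹ + p³Y⁻¹Z⁻² + p³Y⁻²Z⁻² - p²Y⁻¹Z⁻², and let τ̂₂₄ = p⁴Y²Z⁴ + p⁴Y²Z² + p⁴YZ² - p³Y²Z² + p⁴Y² + p⁴Z² - p³YZ² + p⁴Y - p³Z² + 2p⁴ - p³Y + p⁴Y⁻¹ - 2p³ + p⁴Z⁻² + p⁴Y⁻² - p³Y⁻¹ + p⁴Y⁻¹Z⁻² - p³Z⁻² + p⁴Y⁻²Z⁻² - p³Y⁻¹Z⁻² - p³Y⁻²Z⁻²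 + p⁴Y⁻²Z⁻⁴. Then (τ̂₁₂)² = (p⁴ + p³ + p² + p)·1 + (p+1)·τ̂₀₂ + (p-1)·τ̂₁₂ + τ̂₂₄. -/
section
variable {R : Type*} [CommRing R]

/-- The spherical transform `τ̂₁₂` of the basic Hecke operator `τ_{1,2}(p)`,
as a Laurent polynomial in `Y, Z` (stated universally: in any commutative ring
with `p` an element and `Y, Z` units). -/
def tauHat12 (p : R) (Y Z : Rˣ) : R :=
  p ^ 2 * Y * Z ^ 2 + p ^ 2 * Y + p ^ 2 + p ^ 2 * (↑Y⁻¹ : R) - 1 +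
    p ^ 2 * (↑Y⁻¹ : R) * (↑Z⁻¹ : R) ^ 2

/-- The spherical transform `τ̂₀₂` of `τ_{0,2}(p)`. -/
def tauHat02 (p : R) (Y Z : Rˣ) : R :=
  p ^ 3 * Y ^ 2 * Z ^ 2 + p ^ 3 * Y * Z ^ 2 + p ^ 3 * Z ^ 2 - p ^ 2 * Y * Z ^ 2 +
    p ^ 3 * Y + 2 * p ^ 3 - p ^ 2 * Y + p ^ 3 * (↑Y⁻¹ : R) - 2 * p ^ 2 +
    p ^ 3 * (↑Z⁻¹ : R) ^ 2 - p ^ 2 * (↑Y⁻¹ : R) + p ^ 3 * (↑Y⁻¹ : R) * (↑Z⁻¹ : R) ^ 2 +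
    p ^ 3 * (↑Y⁻¹ : R) ^ 2 * (↑Z⁻¹ : R) ^ 2 - p ^ 2 * (↑Y⁻¹ : R) * (↑Z⁻¹ : R) ^ 2

/-- The spherical transform `τ̂₂₄` of `τ_{2,4}(p)`. -/
def tauHat24 (p : R) (Y Z : Rˣ) : R :=
  p ^ 4 * Y ^ 2 * Z ^ 4 + p ^ 4 * Y ^ 2 * Z ^ 2 + p ^ 4 * Y * Z ^ 2 -
    p ^ 3 * Y ^ 2 * Z ^ 2 + p ^ 4 * Y ^ 2 + p ^ 4 * Z ^ 2 - p ^ 3 * Y * Z ^ 2 +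
    p ^ 4 * Y - p ^ 3 * Z ^ 2 + 2 * p ^ 4 - p ^ 3 * Y + p ^ 4 * (↑Y⁻¹ : R) -
    2 * p ^ 3 + p ^ 4 * (↑Z⁻¹ : R) ^ 2 + p ^ 4 * (↑Y⁻¹ : R) ^ 2 - p ^ 3 * (↑Y⁻¹ : R) +
    p ^ 4 * (↑Y⁻¹ : R) * (↑Z⁻¹ : R) ^ 2 - p ^ 3 * (↑Z⁻¹ : R) ^ 2 +
    p ^ 4 * (↑Y⁻¹ : R) ^ 2 * (↑Z⁻¹ : R) ^ 2 - p ^ 3 * (↑Y⁻¹ : R) * (↑Z⁻¹ : R) ^ 2 -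
    p ^ 3 * (↑Y⁻¹ : R) ^ 2 * (↑Z⁻¹ : R) ^ 2 + p ^ 4 * (↑Y⁻¹ : R) ^ 2 * (↑Z⁻¹ : R) ^ 4

end

/-!
In the Satake variables `a = Y`, `b = Y Z²`, let `χ` be the character of the five-dimensional
representation of the dual group, with weights `1, a^{±1}, b^{±1}`, and `χ_{Sym²}`, `χ_{Λ²}` the
characters of its symmetric and exterior squares. Then `τ̂₁₂ = p² χ - 1`,
`τ̂₀₂ = p³ χ_{Λ²} - p² (χ + 1)` and `τ̂₂₄ = p⁴ (χ_{Sym²} - 1) - p³ χ_{Λ²}`, and the identity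
reduces to `χ² = χ_{Sym²} + χ_{Λ²}`, i.e. `V ⊗ V = Sym² V ⊕ Λ² V`.
-/

section
variable {R : Type*} [CommRing R]

def so5StdChar (a b : Rˣ) : R := 1 + a + ↑a⁻¹ + b + ↑b⁻¹

def so5ExtSqChar (a b : Rˣ) : R :=
  ↑(a * b) + ↑(a * b⁻¹) + ↑(a⁻¹ * b) + ↑(a⁻¹ * b⁻¹) + so5StdChar a b + 1

def so5SymSqChar (a b : Rˣ) : R :=
  ↑(a ^ 2) + ↑(a⁻¹ ^ 2) + ↑(b ^ 2) + ↑(b⁻¹ ^ 2) +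
    ↑(a * b) + ↑(a * b⁻¹) + ↑(a⁻¹ * b) + ↑(a⁻¹ * b⁻¹) + so5StdChar a b + 2

theorem so5StdChar_sq (a b : Rˣ) :
    so5StdChar a b ^ 2 = so5SymSqChar a b + so5ExtSqChar a b := by
  unfold so5SymSqChar so5ExtSqChar so5StdChar
  push_cast
  linear_combination 2 * a.mul_inv + 2 * b.mul_inv

theorem tauHat12_eq_so5StdChar (p : R) (Y Z : Rˣ) :
    tauHat12 p Y Z = p ^ 2 * so5StdChar Y (Y * Z ^ 2) - 1 := by
  unfold tauHat12 so5StdChar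
  push_cast [mul_inv]
  ring

theorem tauHat02_eq_so5ExtSqChar (p : R) (Y Z : Rˣ) :
    tauHat02 p Y Z =
      p ^ 3 * so5ExtSqChar Y (Y * Z ^ 2) - p ^ 2 * (so5StdChar Y (Y * Z ^ 2) + 1) := by
  unfold tauHat02 so5ExtSqChar so5StdChar
  push_cast [mul_inv]
  grind [Units.mul_inv]

theorem tauHat24_eq_so5SymSqChar (p : R) (Y Z : Rˣ) :
    tauHat24 p Y Z =
      p ^ 4 * (so5SymSqChar Y (Y * Z ^ 2) - 1) - p ^ 3 * so5ExtSqChar Y (Y * Z ^ 2) := by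
  unfold tauHat24 so5SymSqChar so5ExtSqChar so5StdChar
  push_cast [mul_inv]
  grind [Units.mul_inv]

end

/-- The decomposition `(τ̂₁₂)² = (p⁴+p³+p²+p)·1 + (p+1)·τ̂₀₂ + (p-1)·τ̂₁₂ + τ̂₂₄`
of the square of the spherical transform of `T₂(p) = τ_{1,2}(p)`, as an identity
of Laurent polynomials in `Y, Z` with coefficients polynomial in `p`. -/
theorem tauHat12_sq_decomposition {R : Type*} [CommRing R] (p : R) (Y Z : Rˣ) :
    (tauHat12 p Y Z) ^ 2 =
      (p ^ 4 + p ^ 3 + p ^ 2 + p) * 1 + (p + 1) * tauHat02 p Y Z +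
        (p - 1) * tauHat12 p Y Z + tauHat24 p Y Z := by
  rw [tauHat12_eq_so5StdChar, tauHat02_eq_so5ExtSqChar, tauHat24_eq_so5SymSqChar]
  linear_combination p ^ 4 * so5StdChar_sq Y (Y * Z ^ 2)
end

section
/- Let V ⊆ ℝⁿ be the zero set of a family of real polynomials. If V contains a Zariski-dense subset of points with coordinates in ℚ̄ ∩ ℝ (the real algebraic numbers), then the real-radical ideal of V is generated by polynomials with coefficients in ℚ̄ ∩ ℝ; equivalently, V can be defined by polynomial equations with real algebraic coefficients. More concretely: any real polynomial f vanishing on V can be written as a finite ℝ-linear combination f = Σᵢ αᵢ fᵢ where the fᵢ have coefficients in ℚ̄ ∩ ℝ and each fᵢ vanishes on V. -/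
/-!
Fix a basis `B` of `ℝ` over the field `K` of real algebraic numbers and split `f` along it as
`f = ∑ⱼ B j • fⱼ` with `fⱼ ∈ K[X]`. At a point `x ∈ V` with algebraic coordinates every `fⱼ(x)`
lies in `K`, so `0 = f(x) = ∑ⱼ fⱼ(x) • B j` forces `fⱼ(x) = 0` by linear independence of `B`.
Density then makes each `fⱼ` vanish on all of `V`.
-/

open MvPolynomial

namespace Module.Basis

variable {ι K L σ : Type*} [CommRing K] [CommRing L] [Algebra K L] (B : Basis ι K L)

theorem sum_repr_smul_of_support_subset {c : L} {T : Finset ι} (hT : (B.repr c).support ⊆ T) :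
    ∑ j ∈ T, B.repr c j • B j = c := by
  conv_rhs => rw [← B.linearCombination_repr c]
  rw [Finsupp.linearCombination_apply,
    Finsupp.sum_of_support_subset _ hT (fun j a => a • B j) fun _ _ => zero_smul K _]

noncomputable def coordMvPolynomial (j : ι) (f : MvPolynomial σ L) : MvPolynomial σ K :=
  ∑ m ∈ f.support, monomial m (B.repr (coeff m f) j)

theorem coeff_coordMvPolynomial (j : ι) (f : MvPolynomial σ L) (m : σ →₀ ℕ) :
    coeff m (B.coordMvPolynomial j f) = B.repr (coeff m f) j := by
  classical
  simp only [coordMvPolynomial, coeff_sum, coeff_monomial, Finset.sum_ite_eq']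
  split_ifs with h
  · rfl
  · simp [MvPolynomial.notMem_support_iff.mp h]

variable [DecidableEq ι]

noncomputable def mvPolynomialSupport (f : MvPolynomial σ L) : Finset ι :=
  f.support.biUnion fun m => (B.repr (coeff m f)).support

theorem repr_coeff_support_subset (f : MvPolynomial σ L) (m : σ →₀ ℕ) :
    (B.repr (coeff m f)).support ⊆ B.mvPolynomialSupport f := by
  by_cases hm : m ∈ f.support
  · exact Finset.subset_biUnion_of_mem (fun m => (B.repr (coeff m f)).support) hm
  · simp [MvPolynomial.notMem_support_iff.mp hm]

theorem sum_smul_map_coordMvPolynomial (f : MvPolynomial σ L) :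
    ∑ j ∈ B.mvPolynomialSupport f, B j • map (algebraMap K L) (B.coordMvPolynomial j f) = f := by
  ext m
  simp only [coeff_sum, coeff_smul, coeff_map, coeff_coordMvPolynomial, smul_eq_mul]
  conv_rhs => rw [← B.sum_repr_smul_of_support_subset (B.repr_coeff_support_subset f m)]
  simp only [Algebra.smul_def, mul_comm]

theorem eval_coordMvPolynomial_eq_zero {f : MvPolynomial σ L} {x : σ → K}
    (hf : eval (algebraMap K L ∘ x) f = 0) {j : ι} (hj : j ∈ B.mvPolynomialSupport f) :
    eval x (B.coordMvPolynomial j f) = 0 := by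
  have hsum : ∑ j ∈ B.mvPolynomialSupport f, eval x (B.coordMvPolynomial j f) • B j = 0 := by
    rw [← hf]
    conv_rhs => rw [← B.sum_smul_map_coordMvPolynomial f]
    rw [map_sum]
    refine Finset.sum_congr rfl fun j _ => ?_
    rw [smul_eval, ← map_eval, Algebra.smul_def, mul_comm]
  exact linearIndependent_iff'.mp B.linearIndependent _ _ hsum j hj

end Module.Basis

theorem defined_over_real_algebraic_numbers_general {n : ℕ} (V : Set (Fin n → ℝ))
    (hdense : ∀ g : MvPolynomial (Fin n) ℝ,
      (∀ x ∈ V, (∀ i, IsAlgebraic ℚ (x i)) → eval x g = 0) → ∀ x ∈ V, eval x g = 0)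
    (f : MvPolynomial (Fin n) ℝ) (hf : ∀ x ∈ V, eval x f = 0) :
    ∃ (k : ℕ) (α : Fin k → ℝ) (g : Fin k → MvPolynomial (Fin n) ℝ),
      (∀ i : Fin k, ∀ m : Fin n →₀ ℕ, IsAlgebraic ℚ (coeff m (g i))) ∧
      (∀ i : Fin k, ∀ x ∈ V, eval x (g i) = 0) ∧
      f = ∑ i : Fin k, α i • g i := by
  classical
  let K := algebraicClosure ℚ ℝ
  let B := Module.Basis.ofVectorSpace K ℝ
  let T := B.mvPolynomialSupport f
  let g (j : T) : MvPolynomial (Fin n) ℝ := map (algebraMap K ℝ) (B.coordMvPolynomial j f)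
  refine ⟨T.card, fun i => B (T.equivFin.symm i), fun i => g (T.equivFin.symm i), ?_, ?_, ?_⟩
  · intro i m
    exact mem_algebraicClosure_iff.1 (coeff m (B.coordMvPolynomial (T.equivFin.symm i) f)).2
  · intro i
    refine hdense _ fun x hx hxalg => ?_
    let y (k : Fin n) : K := ⟨x k, mem_algebraicClosure_iff.2 (hxalg k)⟩
    have hy : algebraMap K ℝ ∘ y = x := rfl
    have hfy : eval (algebraMap K ℝ ∘ y) f = 0 := hy ▸ hf x hx
    rw [← hy, ← map_eval, B.eval_coordMvPolynomial_eq_zero hfy (T.equivFin.symm i).2, map_zero]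
  · conv_lhs => rw [← B.sum_smul_map_coordMvPolynomial f, ← Finset.sum_coe_sort]
    exact (T.equivFin.symm.sum_comp _).symm

/-- Let `V ⊆ ℝⁿ` be the zero set of a family of real polynomials. If the set of
points of `V` with real algebraic coordinates is Zariski-dense in `V` (i.e. every
polynomial vanishing on it vanishes on `V`), then any real polynomial `f` vanishing
on `V` is a finite `ℝ`-linear combination `f = Σᵢ αᵢ • fᵢ` of polynomials `fᵢ` with
real algebraic coefficients, each vanishing on `V`. -/
theorem defined_over_real_algebraic_numbers {n : ℕ} (V : Set (Fin n → ℝ))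
    (S : Set (MvPolynomial (Fin n) ℝ))
    (hV : V = {x | ∀ g ∈ S, eval x g = 0})
    (hdense : ∀ g : MvPolynomial (Fin n) ℝ,
      (∀ x ∈ V, (∀ i, IsAlgebraic ℚ (x i)) → eval x g = 0) → ∀ x ∈ V, eval x g = 0)
    (f : MvPolynomial (Fin n) ℝ) (hf : ∀ x ∈ V, eval x f = 0) :
    ∃ (k : ℕ) (α : Fin k → ℝ) (g : Fin k → MvPolynomial (Fin n) ℝ),
      (∀ i : Fin k, ∀ m : Fin n →₀ ℕ, IsAlgebraic ℚ (coeff m (g i))) ∧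
      (∀ i : Fin k, ∀ x ∈ V, eval x (g i) = 0) ∧
      f = ∑ i : Fin k, α i • g i :=
  defined_over_real_algebraic_numbers_general V hdense f hf
end

section
/- Let g = ((a, b), (c, d)) be an invertible 2×2 matrix over the quaternions ℍ with d invertible. Then the set of u ∈ V³ = ℝ + ℝi + ℝj such that the strictly-upper-triangular matrix ((0, u), (0, 0)) belongs to g·(𝔥 + 𝔪)·g⁻¹ — where 𝔥 is the set of 2×2 complex matrices (entries in ℝ + ℝi) X = ((x, y), (z, w)) and 𝔪 is the set of matrices diag(α, -α) with α a purely imaginary quaternion — is contained in the image of ℂ = ℝ + ℝi under the real-linear map y ↦ (a - b d⁻¹ c) · y · d⁻¹, and hence spans a real subspace of V³ of dimension at most 2. -/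
open Quaternion

/-! Only the second column of `((0, u), (0, 0)) · g = g · (X + Y)` matters: it reads
`u d = a y + b (w - α)` and `0 = c y + d (w - α)`. Eliminating `w - α` with `d⁻¹` gives
`u = (a - b d⁻¹ c) y d⁻¹` with `y` complex, so the set lies in the image of the real plane `ℂ`
under a real-linear map. -/

theorem eq_schur_mul_mul_of_column_eq {R : Type*} [Ring R] {a b c d dinv u y v : R}
    (hd : d * dinv = 1) (hd' : dinv * d = 1)
    (hu : u * d = a * y + b * v) (h0 : 0 = c * y + d * v) :
    u = (a - b * dinv * c) * y * dinv := by
  have hv : v = -(dinv * (c * y)) := by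
    rw [← mul_neg, ← eq_neg_of_add_eq_zero_right h0.symm, ← mul_assoc, hd', one_mul]
  calc u = u * d * dinv := by rw [mul_assoc, hd, mul_one]
    _ = (a - b * dinv * c) * y * dinv := by rw [hu, hv]; noncomm_ring

theorem finrank_span_le_of_subset_range {K V W : Type*} [DivisionRing K] [AddCommGroup V]
    [Module K V] [AddCommGroup W] [Module K W] [FiniteDimensional K V] {f : V →ₗ[K] W}
    {s : Set W} (hs : s ⊆ Set.range f) :
    Module.finrank K (Submodule.span K s) ≤ Module.finrank K V :=
  (Submodule.finrank_mono (Submodule.span_le.2 (by rwa [LinearMap.coe_range]))).trans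
    (LinearMap.finrank_range_le f)

theorem Quaternion.range_ofComplex :
    Set.range ofComplex = {y : ℍ | y.imJ = 0 ∧ y.imK = 0} := by
  ext y
  constructor
  · rintro ⟨z, rfl⟩
    exact ⟨imJ_coeComplex z, imK_coeComplex z⟩
  · rintro ⟨hJ, hK⟩
    exact ⟨⟨y.re, y.imI⟩, by ext <;> simp [hJ, hK]⟩

/-- Let `g = ((a, b), (c, d))` be a matrix over the quaternions with `d` invertible
(with two-sided inverse `dinv`). The set of `u ∈ V³ = ℝ + ℝi + ℝj` such that
`((0, u), (0, 0)) · g = g · (X + Y)` for some `X = ((x, y), (z, w))` with complex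
entries (in `ℝ + ℝi`) and `Y = diag(α, -α)` with `α` purely imaginary, is contained
in the image of `ℂ = ℝ + ℝi` under the real-linear map `y ↦ (a - b d⁻¹ c) · y · d⁻¹`,
and hence spans a real subspace of dimension at most `2`. -/
theorem unipotent_intersection_dim_le_two (a b c d dinv : ℍ[ℝ])
    (hd : d * dinv = 1) (hd' : dinv * d = 1) :
    ({u : ℍ[ℝ] | u.imK = 0 ∧ ∃ x y z w α : ℍ[ℝ],
        (x.imJ = 0 ∧ x.imK = 0) ∧ (y.imJ = 0 ∧ y.imK = 0) ∧
        (z.imJ = 0 ∧ z.imK = 0) ∧ (w.imJ = 0 ∧ w.imK = 0) ∧ α.re = 0 ∧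
        u * c = a * (x + α) + b * z ∧
        u * d = a * y + b * (w - α) ∧
        0 = c * (x + α) + d * z ∧
        0 = c * y + d * (w - α)} ⊆
      (fun y : ℍ[ℝ] => (a - b * dinv * c) * y * dinv) ''
        {y : ℍ[ℝ] | y.imJ = 0 ∧ y.imK = 0}) ∧
    Module.finrank ℝ (Submodule.span ℝ
      {u : ℍ[ℝ] | u.imK = 0 ∧ ∃ x y z w α : ℍ[ℝ],
        (x.imJ = 0 ∧ x.imK = 0) ∧ (y.imJ = 0 ∧ y.imK = 0) ∧
        (z.imJ = 0 ∧ z.imK = 0) ∧ (w.imJ = 0 ∧ w.imK = 0) ∧ α.re = 0 ∧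
        u * c = a * (x + α) + b * z ∧
        u * d = a * y + b * (w - α) ∧
        0 = c * (x + α) + d * z ∧
        0 = c * y + d * (w - α)}) ≤ 2 := by
  let f := (LinearMap.mulLeftRight ℝ (a - b * dinv * c, dinv)).comp ofComplex.toLinearMap
  have hrange : (fun y : ℍ[ℝ] => (a - b * dinv * c) * y * dinv) ''
      {y : ℍ[ℝ] | y.imJ = 0 ∧ y.imK = 0} = Set.range f := by
    rw [← Quaternion.range_ofComplex, ← Set.range_comp]
    rfl
  refine ⟨?hsub, (finrank_span_le_of_subset_range (Set.Subset.trans ?hsub hrange.le)).trans_eq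
    Complex.finrank_real_complex⟩
  rintro u ⟨-, x, y, z, w, α, -, hy, -, -, -, -, hu, -, h0⟩
  exact ⟨y, hy, (eq_schur_mul_mul_of_column_eq hd hd' hu h0).symm⟩
end

section
/- For the quaternion algebra ℍ(ℤ) of Lipschitz integers, an element α with norm N(α) = p (p an odd prime) satisfies p ∤ αⁿ for all n ≥ 1 if and only if the real part Re(α) ≠ 0. -/
/-!
Cayley–Hamilton in `ℍ[ℤ]` reads `α² = 2 Re(α) α - N(α)`, so when `N(α) = p` every power satisfies
`αⁿ⁺¹ ≡ (2 Re α)ⁿ α (mod p)`. If `Re α = 0` this gives `α² = -p`. Otherwise, comparing real parts,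
`p ∣ αⁿ⁺¹` would force `p ∣ 2ⁿ (Re α)ⁿ⁺¹`, hence `p ∣ Re α` as `p` is odd; but
`0 < (Re α)² ≤ N(α) = p` leaves no room for a nonzero multiple of `p`.
-/

open Quaternion

namespace Quaternion

variable {R : Type*} [CommRing R]

theorem sq_eq_two_re_smul_sub_normSq (x : ℍ[R]) :
    x ^ 2 = (2 * x.re) • x - ((normSq x : R) : ℍ[R]) := by
  rw [← self_mul_star, star_eq_two_re_sub, mul_sub, mul_coe_eq_smul, pow_two]
  abel

theorem exists_pow_succ_eq_two_re_pow_smul_add_normSq_mul (x : ℍ[R]) (n : ℕ) :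
    ∃ y : ℍ[R], x ^ (n + 1) = (2 * x.re) ^ n • x + ((normSq x : R) : ℍ[R]) * y := by
  induction n with
  | zero => exact ⟨0, by simp⟩
  | succ n ih =>
    obtain ⟨y, hy⟩ := ih
    refine ⟨y * x - ((2 * x.re) ^ n : R), ?_⟩
    rw [pow_succ, hy, add_mul, smul_mul_assoc, ← pow_two, sq_eq_two_re_smul_sub_normSq,
      smul_sub, smul_smul, ← pow_succ, mul_sub, mul_assoc, ← coe_mul, mul_comm (normSq x),
      ← smul_coe]
    abel

theorem normSq_dvd_two_re_pow_mul_re_of_pow_succ_eq_normSq_mul {x β : ℍ[R]} {n : ℕ}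
    (h : x ^ (n + 1) = ((normSq x : R) : ℍ[R]) * β) : normSq x ∣ (2 * x.re) ^ n * x.re := by
  obtain ⟨y, hy⟩ := exists_pow_succ_eq_two_re_pow_smul_add_normSq_mul x n
  have hre := congrArg (fun q : ℍ[R] ↦ q.re) (hy.symm.trans h)
  simp only [coe_mul_eq_smul, re_add, re_smul, smul_eq_mul] at hre
  exact ⟨β.re - y.re, by linear_combination hre⟩

theorem sq_re_le_normSq [LinearOrder R] [IsStrictOrderedRing R] (x : ℍ[R]) :
    x.re ^ 2 ≤ normSq x := by
  rw [normSq_def']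
  nlinarith [sq_nonneg x.imI, sq_nonneg x.imJ, sq_nonneg x.imK]

end Quaternion

theorem Int.not_dvd_of_sq_le {p a : ℤ} (hp : 1 < p) (ha : a ≠ 0) (h : a ^ 2 ≤ p) : ¬ p ∣ a := by
  intro hdvd
  have hle : p ≤ |a| := Int.le_of_dvd (abs_pos.mpr ha) ((dvd_abs _ _).mpr hdvd)
  nlinarith [sq_abs a]

/-- For a Lipschitz integer quaternion `α` with norm `N(α) = p`, where `p` is an odd
prime, one has `p ∤ αⁿ` (i.e. `αⁿ ∉ p·ℍ(ℤ)`) for all `n ≥ 1` if and only if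
`Re(α) ≠ 0`. -/
theorem lipschitz_quaternion_not_dvd_iff_re_ne_zero (p : ℕ) (hp : p.Prime)
    (hodd : p ≠ 2) (α : ℍ[ℤ]) (hN : Quaternion.normSq α = (p : ℤ)) :
    (∀ n : ℕ, 1 ≤ n → ¬ ∃ β : ℍ[ℤ], α ^ n = (p : ℍ[ℤ]) * β) ↔ α.re ≠ 0 := by
  constructor
  · intro h hre
    refine h 2 one_le_two ⟨-1, ?_⟩
    rw [sq_eq_two_re_smul_sub_normSq, hre, hN]
    push_cast
    simp
  · rintro hre n hn ⟨β, hβ⟩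
    obtain ⟨m, rfl⟩ : ∃ m, n = m + 1 := ⟨n - 1, by omega⟩
    have hp' : Prime (p : ℤ) := Nat.prime_iff_prime_int.mp hp
    have hp_not_dvd_two : ¬ (p : ℤ) ∣ 2 := by
      exact_mod_cast fun h ↦ hodd ((Nat.prime_dvd_prime_iff_eq hp Nat.prime_two).mp h)
    have hdvd_re_part : (p : ℤ) ∣ (2 * α.re) ^ m * α.re := by
      rw [← hN]
      exact normSq_dvd_two_re_pow_mul_re_of_pow_succ_eq_normSq_mul (by rw [hβ, hN, coe_natCast])
    have hdvd_re : (p : ℤ) ∣ α.re := by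
      have := dvd_mul_of_dvd_right hdvd_re_part 2
      rw [show 2 * ((2 * α.re) ^ m * α.re) = (2 * α.re) ^ (m + 1) by ring] at this
      exact (hp'.dvd_mul.mp (hp'.dvd_of_dvd_pow this)).resolve_left hp_not_dvd_two
    exact Int.not_dvd_of_sq_le (mod_cast hp.one_lt) hre (hN ▸ sq_re_le_normSq α) hdvd_re
end
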